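/- arXiv:1806.09691 — 3 statements merged into one kernel-verified Lean document; each statement's English description precedes it below -/
import Mathlib

section
/- Let G be a group and let (V, σ, ρ) and (V', σ', ρ') be symplectic G-representations. Suppose there exists a G-equivariant symplectomorphism from V to V', i.e., a bijection Φ : V → V' such that Φ and Φ⁻¹ are Fréchet differentiable, Φ ∘ ρ_g = ρ'_g ∘ Φ for every g ∈ G, and σ'(DΦ(x)u, DΦ(x)w) = σ(u, w) for every x, u, w ∈ V. Then ρ and ρ' are isomorphic as symplectic G-representations: there exists a linear bijection T : V → V' with σ'(Tu, Tw) = σ(u, w) for all u, w ∈ V and T ∘ ρ_g = ρ'_g ∘ T for all g ∈ G. (In fact T = DΦ(0) has these properties.) -/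
/-- If two symplectic `G`-representations are related by a `G`-equivariant
symplectomorphism (a bijection, Fréchet differentiable in both directions, equivariant, whose
differential at every point is symplectic), then they are isomorphic as symplectic
`G`-representations. -/
theorem equivariant_symplectomorphic_reps_linearly_isomorphic
    {G : Type*} [Group G]
    {V V' : Type*}
    [NormedAddCommGroup V] [NormedSpace ℝ V] [FiniteDimensional ℝ V]
    [NormedAddCommGroup V'] [NormedSpace ℝ V'] [FiniteDimensional ℝ V']
    (σ : V →ₗ[ℝ] V →ₗ[ℝ] ℝ) (σ' : V' →ₗ[ℝ] V' →ₗ[ℝ] ℝ)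
    (hσalt : ∀ v, σ v v = 0) (hσnd : ∀ u, (∀ w, σ u w = 0) → u = 0)
    (hσ'alt : ∀ v, σ' v v = 0) (hσ'nd : ∀ u, (∀ w, σ' u w = 0) → u = 0)
    (ρ : G →* (V ≃ₗ[ℝ] V)) (ρ' : G →* (V' ≃ₗ[ℝ] V'))
    (hρ : ∀ g u w, σ (ρ g u) (ρ g w) = σ u w)
    (hρ' : ∀ g u w, σ' (ρ' g u) (ρ' g w) = σ' u w)
    (Φ : V → V') (Ψ : V' → V)
    (hΨΦ : Function.LeftInverse Ψ Φ) (hΦΨ : Function.RightInverse Ψ Φ)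
    (hΦdiff : Differentiable ℝ Φ) (hΨdiff : Differentiable ℝ Ψ)
    (hequiv : ∀ g v, Φ (ρ g v) = ρ' g (Φ v))
    (hsymp : ∀ x u w, σ' (fderiv ℝ Φ x u) (fderiv ℝ Φ x w) = σ u w) :
    ∃ T : V ≃ₗ[ℝ] V',
      (∀ u w, σ' (T u) (T w) = σ u w) ∧ (∀ g v, T (ρ g v) = ρ' g (T v)) := by
  set A := fderiv ℝ Φ 0 with hA
  set B := fderiv ℝ Ψ (Φ 0) with hB
  -- B ∘ A = id
  have hBA : B.comp A = ContinuousLinearMap.id ℝ V := by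
    have h1 : fderiv ℝ (Ψ ∘ Φ) 0 = B.comp A :=
      fderiv_comp (x := 0) (hΨdiff _) (hΦdiff _)
    have h2 : (Ψ ∘ Φ) = id := funext hΨΦ
    rw [h2, fderiv_id] at h1
    exact h1.symm
  have hAB : A.comp B = ContinuousLinearMap.id ℝ V' := by
    have h1 : fderiv ℝ (Φ ∘ Ψ) (Φ 0) = (fderiv ℝ Φ (Ψ (Φ 0))).comp B :=
      fderiv_comp _ (hΦdiff _) (hΨdiff _)
    have h2 : (Φ ∘ Ψ) = id := funext hΦΨ
    have h3 : Ψ (Φ 0) = 0 := hΨΦ 0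
    rw [h2, fderiv_id, h3, ← hA] at h1
    exact h1.symm
  have hBAfun : ∀ v, B (A v) = v := fun v =>
    congrArg (fun (f : V →L[ℝ] V) => f v) hBA
  have hABfun : ∀ v, A (B v) = v := fun v =>
    congrArg (fun (f : V' →L[ℝ] V') => f v) hAB
  refine ⟨LinearEquiv.ofLinear (A : V →ₗ[ℝ] V') (B : V' →ₗ[ℝ] V)
    (LinearMap.ext hABfun) (LinearMap.ext hBAfun), ?_, ?_⟩
  · intro u w
    exact hsymp 0 u w
  · intro g v
    -- differentiate the equivariance at 0
    have hρg : Differentiable ℝ (fun v => (ρ g v : V)) :=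
      (ρ g).toLinearMap.toContinuousLinearMap.differentiable
    have e1 : fderiv ℝ (fun v => Φ (ρ g v)) 0
        = (fderiv ℝ Φ ((ρ g : V →ₗ[ℝ] V).toContinuousLinearMap 0)).comp
          (ρ g : V →ₗ[ℝ] V).toContinuousLinearMap := by
      have := fderiv_comp (𝕜 := ℝ) (f := ((ρ g : V →ₗ[ℝ] V).toContinuousLinearMap : V → V))
        (g := Φ) (x := 0) (hΦdiff _) ((ρ g : V →ₗ[ℝ] V).toContinuousLinearMap.differentiableAt)
      rw [ContinuousLinearMap.fderiv] at this
      exact this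
    have e2 : fderiv ℝ (fun v => (ρ' g (Φ v) : V')) 0
        = ((ρ' g : V' →ₗ[ℝ] V').toContinuousLinearMap).comp (fderiv ℝ Φ 0) := by
      have := fderiv_comp (𝕜 := ℝ) (f := Φ)
        (g := ((ρ' g : V' →ₗ[ℝ] V').toContinuousLinearMap : V' → V')) (x := 0)
        (((ρ' g : V' →ₗ[ℝ] V').toContinuousLinearMap).differentiableAt) (hΦdiff _)
      rw [ContinuousLinearMap.fderiv] at this
      exact this
    have hfun : (fun v => Φ (ρ g v)) = (fun v => (ρ' g (Φ v) : V')) :=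
      funext fun v => hequiv g v
    have hz : ((ρ g : V →ₗ[ℝ] V).toContinuousLinearMap : V → V) 0 = 0 := by simp
    rw [hfun, e2] at e1
    have := congrArg (fun (f : V →L[ℝ] V') => f v) e1
    simp only [ContinuousLinearMap.comp_apply] at this
    rw [hz] at this
    simpa using this.symm
end

section
/- Let N be a compact Hausdorff topological space in which every connected component is an open subset. Then every map ψ : N → N that is continuous, injective, and open is surjective, and hence a homeomorphism of N onto itself. -/
/-- Let `N` be a compact Hausdorff topological space whose connected components
are all open. Then every continuous injective open map `ψ : N → N` is surjective, and hence a
homeomorphism of `N` onto itself. -/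
theorem continuous_injective_open_self_map_surjective
    {N : Type*} [TopologicalSpace N] [CompactSpace N] [T2Space N]
    (hcomp : ∀ x : N, IsOpen (connectedComponent x))
    (ψ : N → N) (hcont : Continuous ψ) (hinj : Function.Injective ψ)
    (hopen : IsOpenMap ψ) :
    Function.Surjective ψ ∧ ∃ e : N ≃ₜ N, ⇑e = ψ := by
  -- The quotient by connected components is discrete and compact, hence finite.
  have hdisc : DiscreteTopology (ConnectedComponents N) := by
    rw [discreteTopology_iff_isOpen_singleton]
    intro a
    obtain ⟨x, rfl⟩ := ConnectedComponents.surjective_coe a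
    rw [← ConnectedComponents.isQuotientMap_coe.isOpen_preimage,
      connectedComponents_preimage_singleton]
    exact hcomp x
  have hcompact : CompactSpace (ConnectedComponents N) := Quotient.compactSpace
  have hfin : Finite (ConnectedComponents N) := finite_of_compact_of_discrete
  -- Key: ψ maps each connected component onto a connected component.
  have key : ∀ x : N, ψ '' connectedComponent x = connectedComponent (ψ x) := by
    intro x
    apply Set.Subset.antisymm
    · exact (isPreconnected_connectedComponent.image ψ hcont.continuousOn).subset_connectedComponent
        ⟨x, mem_connectedComponent, rfl⟩
    · refine IsClopen.connectedComponent_subset ⟨?_, hopen _ (hcomp x)⟩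
        ⟨x, mem_connectedComponent, rfl⟩
      exact ((isClosed_connectedComponent (x := x)).isCompact.image hcont).isClosed
  -- Induced map on components is injective, hence surjective.
  have hsurj : Function.Surjective ψ := by
    have finj : Function.Injective (fun a : ConnectedComponents N =>
        (ConnectedComponents.mk (ψ a.out))) := by
      intro a b hab
      simp only [ConnectedComponents.coe_eq_coe] at hab
      have : ψ a.out ∈ ψ '' connectedComponent b.out := by
        rw [key]; exact hab ▸ mem_connectedComponent
      obtain ⟨z, hz, hzeq⟩ := this
      have : a.out ∈ connectedComponent b.out := hinj hzeq ▸ hz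
      have h2 : connectedComponent a.out = connectedComponent b.out :=
        (connectedComponent_eq this).symm
      calc a = ConnectedComponents.mk a.out := (a.out_eq).symm
        _ = ConnectedComponents.mk b.out := by
            rw [ConnectedComponents.coe_eq_coe]; exact h2
        _ = b := b.out_eq
    have fsurj := Finite.surjective_of_injective finj
    intro y
    obtain ⟨a, ha⟩ := fsurj (ConnectedComponents.mk y)
    simp only [ConnectedComponents.coe_eq_coe] at ha
    have : y ∈ ψ '' connectedComponent a.out := by
      rw [key, ha]; exact mem_connectedComponent
    obtain ⟨z, _, hz⟩ := this
    exact ⟨z, hz⟩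
  exact ⟨hsurj, ⟨Equiv.toHomeomorphOfContinuousOpen
    (Equiv.ofBijective ψ ⟨hinj, hsurj⟩) hcont hopen, rfl⟩⟩
end

section
/- Let 𝔥 and 𝔥' be finite-dimensional real Lie algebras, let (V, σ) and (V', σ') be finite-dimensional real vector spaces equipped with alternating bilinear forms, with σ nondegenerate, let θ : 𝔥 → End(V) and θ' : 𝔥' → End(V') be Lie algebra homomorphisms, let f : 𝔥 → 𝔥' be a surjective linear map, and let T : V → V' be a linear map satisfying σ'(Tu, Tw) = σ(u, w) for all u, w ∈ V and T ∘ θ(ξ) = θ'(f(ξ)) ∘ T for all ξ ∈ 𝔥. Define ν : V → 𝔥* by ν(v)(ξ) := (1/2)·σ(θ(ξ)v, v) and ν' : V' → (𝔥')* by ν'(v')(ξ') := (1/2)·σ'(θ'(ξ')v', v'). If the preimage under ν' of every compact subset of (𝔥')* is compact, then the preimage under ν of every compact subset of 𝔥* is compact. -/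
/-- The momentum map `ν : V → 𝔥*` vanishing at `0` of a linear Lie algebra action `θ` on a
vector space with bilinear form `σ`: `ν(v)(ξ) = (1/2)·σ(θ(ξ)v, v)`, viewed as an element of the
(topological) dual of the finite-dimensional Lie algebra `𝓱`. -/
noncomputable def momentMap {𝓱 V : Type*}
    [NormedAddCommGroup 𝓱] [NormedSpace ℝ 𝓱] [FiniteDimensional ℝ 𝓱]
    [AddCommGroup V] [Module ℝ V]
    (σ : V →ₗ[ℝ] V →ₗ[ℝ] ℝ) (θ : 𝓱 →ₗ[ℝ] Module.End ℝ V) (v : V) : 𝓱 →L[ℝ] ℝ :=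
  LinearMap.toContinuousLinearMap
    { toFun := fun ξ => (1 / 2 : ℝ) * σ (θ ξ v) v
      map_add' := by
        intro ξ η
        have h : θ (ξ + η) = θ ξ + θ η := θ.map_add ξ η
        simp only [h, LinearMap.add_apply, map_add]
        ring
      map_smul' := by
        intro c ξ
        have h : θ (c • ξ) = c • θ ξ := θ.map_smul c ξ
        simp only [h, LinearMap.smul_apply, map_smul, smul_eq_mul, RingHom.id_apply]
        ring }

/-- Momentum properness is inherited along morphisms of symplectic Lie algebra
representations: if `T` intertwines the forms and the Lie algebra actions (over a surjective
linear map `f` between the finite-dimensional real Lie algebras, whose Lie brackets are given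
by the bilinear maps `bra` and `bra'`) and the momentum map `ν'` of the target is proper, then
the momentum map `ν` of the source is proper. -/
theorem momentMap_proper_of_morphism
    {𝓱 𝓱' V V' : Type*}
    [NormedAddCommGroup 𝓱] [NormedSpace ℝ 𝓱] [FiniteDimensional ℝ 𝓱]
    [NormedAddCommGroup 𝓱'] [NormedSpace ℝ 𝓱'] [FiniteDimensional ℝ 𝓱']
    [NormedAddCommGroup V] [NormedSpace ℝ V] [FiniteDimensional ℝ V]
    [NormedAddCommGroup V'] [NormedSpace ℝ V'] [FiniteDimensional ℝ V']
    -- the Lie brackets of `𝓱` and `𝓱'`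
    (bra : 𝓱 →ₗ[ℝ] 𝓱 →ₗ[ℝ] 𝓱) (bra' : 𝓱' →ₗ[ℝ] 𝓱' →ₗ[ℝ] 𝓱')
    (hbra_alt : ∀ ξ, bra ξ ξ = 0)
    (hbra_jacobi : ∀ ξ η ζ, bra ξ (bra η ζ) + bra η (bra ζ ξ) + bra ζ (bra ξ η) = 0)
    (hbra'_alt : ∀ ξ, bra' ξ ξ = 0)
    (hbra'_jacobi : ∀ ξ η ζ, bra' ξ (bra' η ζ) + bra' η (bra' ζ ξ) + bra' ζ (bra' ξ η) = 0)
    -- the alternating bilinear forms, `σ` nondegenerate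
    (σ : V →ₗ[ℝ] V →ₗ[ℝ] ℝ) (σ' : V' →ₗ[ℝ] V' →ₗ[ℝ] ℝ)
    (hσalt : ∀ v, σ v v = 0) (hσ'alt : ∀ v, σ' v v = 0)
    (hσnd : ∀ u, (∀ w, σ u w = 0) → u = 0)
    -- the Lie algebra homomorphisms `θ`, `θ'` into the endomorphisms
    (θ : 𝓱 →ₗ[ℝ] Module.End ℝ V) (θ' : 𝓱' →ₗ[ℝ] Module.End ℝ V')
    (hθlie : ∀ ξ η, θ (bra ξ η) = θ ξ * θ η - θ η * θ ξ)
    (hθ'lie : ∀ ξ η, θ' (bra' ξ η) = θ' ξ * θ' η - θ' η * θ' ξ)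
    -- the surjective linear map `f` and the intertwiner `T`
    (f : 𝓱 →ₗ[ℝ] 𝓱') (hf : Function.Surjective f)
    (T : V →ₗ[ℝ] V')
    (hT : ∀ u w, σ' (T u) (T w) = σ u w)
    (hθ : ∀ ξ v, T (θ ξ v) = θ' (f ξ) (T v))
    (hproper' : ∀ K : Set (𝓱' →L[ℝ] ℝ), IsCompact K → IsCompact (momentMap σ' θ' ⁻¹' K)) :
    ∀ K : Set (𝓱 →L[ℝ] ℝ), IsCompact K → IsCompact (momentMap σ θ ⁻¹' K) := by
  intro K hK
  -- pullback along `f` on duals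
  let g : (𝓱' →L[ℝ] ℝ) →ₗ[ℝ] (𝓱 →L[ℝ] ℝ) :=
    { toFun := fun lam => lam.comp (LinearMap.toContinuousLinearMap f)
      map_add' := fun a b => by ext ξ; simp
      map_smul' := fun c a => by ext ξ; simp }
  have hginj : Function.Injective g := by
    intro a b hab
    ext ξ'
    obtain ⟨ξ, rfl⟩ := hf ξ'
    have := congrArg (fun (l : 𝓱 →L[ℝ] ℝ) => l ξ) hab
    simpa [g] using this
  have hTinj : Function.Injective T := by
    intro u w huw
    have : u - w = 0 := by
      apply hσnd
      intro z
      have : σ' (T (u - w)) (T z) = σ (u - w) z := hT _ _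
      rw [map_sub, huw, sub_self] at this
      simpa using this.symm
    exact sub_eq_zero.mp this
  have hgemb := g.isClosedEmbedding_of_injective (LinearMap.ker_eq_bot.mpr hginj)
  have hTemb := T.isClosedEmbedding_of_injective (LinearMap.ker_eq_bot.mpr hTinj)
  -- key factorization: ν = g ∘ ν' ∘ T
  have hfact : ∀ v : V, momentMap σ θ v = g (momentMap σ' θ' (T v)) := by
    intro v
    ext ξ
    simp only [g, LinearMap.coe_mk, AddHom.coe_mk, ContinuousLinearMap.comp_apply,
      LinearMap.coe_toContinuousLinearMap']
    show (1 / 2 : ℝ) * σ (θ ξ v) v = (1 / 2 : ℝ) * σ' (θ' (f ξ) (T v)) (T v)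
    rw [← hθ, hT]
  have hset : momentMap σ θ ⁻¹' K = T ⁻¹' (momentMap σ' θ' ⁻¹' (g ⁻¹' K)) := by
    ext v
    simp [Set.mem_preimage, hfact v]
  rw [hset]
  exact hTemb.isCompact_preimage (hproper' _ (hgemb.isCompact_preimage hK))
end
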